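/- arXiv:2509.05295 — 5 statements merged into one kernel-verified Lean document; each statement's English description precedes it below -/
import Mathlib

section
/- For the single-qubit ansatz G(φ) = exp(−iσ_X φ₃) exp(−iσ_Y φ₂) exp(−iσ_Z φ₁), the three pulled-back derivatives Ω_j(φ) = G(φ)† ∂G/∂φ_j span the Lie algebra su(2) if and only if cos(2φ₂) ≠ 0. -/
open Matrix
open scoped Matrix.Norms.L2Operator

noncomputable section

/-- Pauli matrix `σ_X`. -/
def σX : Matrix (Fin 2) (Fin 2) ℂ := !![0, 1; 1, 0]
/-- Pauli matrix `σ_Y`. -/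
def σY : Matrix (Fin 2) (Fin 2) ℂ := !![0, -Complex.I; Complex.I, 0]
/-- Pauli matrix `σ_Z`. -/
def σZ : Matrix (Fin 2) (Fin 2) ℂ := !![1, 0; 0, -1]

/-- The single-qubit product-of-exponentials ansatz
`G(φ) = exp(−iσ_X φ₃) exp(−iσ_Y φ₂) exp(−iσ_Z φ₁)`. -/
def G (φ₁ φ₂ φ₃ : ℝ) : Matrix (Fin 2) (Fin 2) ℂ :=
  NormedSpace.exp ((-(Complex.I * φ₃)) • σX) *
    NormedSpace.exp ((-(Complex.I * φ₂)) • σY) *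
    NormedSpace.exp ((-(Complex.I * φ₁)) • σZ)

/-!
For a Pauli matrix `P` (`P² = 1`, `P` Hermitian) the power series gives
`exp(-itP) = cos t - i sin t P`, a unitary commuting with `P`, and for `Q` anticommuting with `P`
the conjugate `exp(itP) Q exp(-itP) = cos 2t Q + sin 2t iPQ` is `Q` rotated by the double angle.
Since `∂G/∂φ_j` inserts `-iσ` next to the corresponding factor, the unitary factors to its left
cancel in `G†∂G/∂φ_j`, and the `Ω_j` are `-iσ_Z` and the conjugates of `-iσ_Y` and `-iσ_X` by the
factors to their right. In the basis `iσ_X, iσ_Y, iσ_Z` of `su(2)` their coefficient matrix has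
determinant `cos 2φ₂`, and three vectors in the span of a linearly independent triple span it iff
their coefficient matrix is invertible.
-/

open Complex

open Set Submodule in
theorem span_range_sum_smul_eq_iff_isUnit_det {R M ι : Type*} [CommRing R] [AddCommGroup M]
    [Module R M] [Fintype ι] [DecidableEq ι] {e : ι → M} (he : LinearIndependent R e)
    (C : Matrix ι ι R) :
    span R (range fun i => ∑ j, C i j • e j) = span R (range e) ↔ IsUnit C.det := by
  set f := Fintype.linearCombination R e
  have hrange : (range fun i => ∑ j, C i j • e j) = f '' range C.row := by
    rw [← range_comp]
    rfl
  rw [hrange, ← map_span, ← Fintype.range_linearCombination R e, LinearMap.range_eq_map f,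
    (map_injective_of_injective he.fintypeLinearCombination_injective).eq_iff,
    ← range_vecMulLinear, LinearMap.range_eq_top, ← isUnit_iff_isUnit_det]
  exact vecMul_surjective_iff_isUnit

section PauliExp

variable {A : Type*} [NormedRing A] [NormedAlgebra ℂ A]

def pauliExp (P : A) (t : ℝ) : A := NormedSpace.exp ((-(I * t)) • P)

variable [CompleteSpace A]

theorem exp_smul_of_mul_self_eq_one {P : A} (hP : P * P = 1) (z : ℂ) :
    NormedSpace.exp (z • P) = cosh z • 1 + sinh z • P := by
  have hP_pow (n : ℕ) : P ^ (2 * n) = 1 := by rw [pow_mul, sq, hP, one_pow]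
  refine (NormedSpace.exp_series_hasSum_exp' (𝕂 := ℂ) (z • P)).unique
    (HasSum.even_add_odd ?_ ?_)
  · convert (hasSum_cosh z).smul_const (1 : A) using 2 with n
    rw [smul_pow, hP_pow, smul_smul, div_eq_inv_mul]
  · convert (hasSum_sinh z).smul_const P using 2 with n
    rw [smul_pow, pow_succ P, hP_pow, one_mul, smul_smul, div_eq_inv_mul]

theorem pauliExp_eq {P : A} (hP : P * P = 1) (t : ℝ) :
    pauliExp P t = (Real.cos t : ℂ) • 1 - (I * Real.sin t) • P := by
  have harg : -(I * t) = ((-t : ℝ) : ℂ) * I := by push_cast; ring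
  rw [pauliExp, exp_smul_of_mul_self_eq_one hP, harg, cosh_mul_I, sinh_mul_I, ← ofReal_cos,
    ← ofReal_sin, Real.cos_neg, Real.sin_neg, sub_eq_add_neg, ← neg_smul]
  congr 2
  push_cast
  ring

theorem hasDerivAt_pauliExp (P : A) (t : ℝ) :
    HasDerivAt (pauliExp P) (pauliExp P t * (-I • P)) t := by
  have hsmul (u : ℝ) : u • (-I • P) = (-(I * u)) • P := by
    rw [← coe_smul, smul_smul, mul_neg, mul_comm]
  have h := hasDerivAt_exp_smul_const (𝕂 := ℝ) (-I • P) t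
  simp only [hsmul] at h
  exact h

variable [StarRing A] [StarModule ℂ A] {P : A}

theorem star_pauliExp (hP : P * P = 1) (hP_sa : IsSelfAdjoint P) (t : ℝ) :
    star (pauliExp P t) = (Real.cos t : ℂ) • 1 + (I * Real.sin t) • P := by
  simp only [pauliExp_eq hP, star_sub, star_smul, star_one, hP_sa.star_eq, star_mul',
    Complex.star_def, conj_I, conj_ofReal, neg_mul, neg_smul, sub_neg_eq_add]

theorem star_pauliExp_mul_cancel_left (hP : P * P = 1) (hP_sa : IsSelfAdjoint P) (t : ℝ)
    (x : A) : star (pauliExp P t) * (pauliExp P t * x) = x := by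
  rw [star_pauliExp hP hP_sa, pauliExp_eq hP]
  simp only [sub_mul, mul_sub, add_mul, smul_mul_assoc, mul_smul_comm, one_mul, ← mul_assoc, hP]
  linear_combination (norm := module)
    (congrArg ((↑) : ℝ → ℂ) (Real.sin_sq_add_cos_sq t)) • x - ((Real.sin t : ℂ) ^ 2 * I_sq) • x

theorem star_pauliExp_mul_self_mul_pauliExp (hP : P * P = 1) (hP_sa : IsSelfAdjoint P) (t : ℝ) :
    star (pauliExp P t) * P * pauliExp P t = P := by
  rw [star_pauliExp hP hP_sa, pauliExp_eq hP]
  simp only [mul_sub, add_mul, smul_mul_assoc, mul_smul_comm, one_mul, mul_one, hP]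
  linear_combination (norm := module)
    (congrArg ((↑) : ℝ → ℂ) (Real.sin_sq_add_cos_sq t)) • P - ((Real.sin t : ℂ) ^ 2 * I_sq) • P

theorem star_pauliExp_mul_mul_pauliExp_of_anticommute (hP : P * P = 1) (hP_sa : IsSelfAdjoint P)
    {Q : A} (hPQ : P * Q = -(Q * P)) (t : ℝ) :
    star (pauliExp P t) * Q * pauliExp P t =
      (Real.cos (2 * t) : ℂ) • Q + (Real.sin (2 * t) : ℂ) • (I • (P * Q)) := by
  have hQP : Q * P = -(P * Q) := by rw [hPQ, neg_neg]
  have hPQP : P * Q * P = -Q := by rw [hPQ, neg_mul, mul_assoc, hP, mul_one]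
  rw [star_pauliExp hP hP_sa, pauliExp_eq hP]
  simp only [mul_sub, add_mul, smul_mul_assoc, mul_smul_comm, one_mul, mul_one, smul_smul, hPQP,
    hQP]
  push_cast
  linear_combination (norm := module)
    ((Real.sin t : ℂ) ^ 2 * I_sq - cos_two_mul' (t : ℂ)) • Q - (I * sin_two_mul (t : ℂ)) • (P * Q)

end PauliExp

theorem σX_mul_self : σX * σX = 1 := by ext i j; fin_cases i <;> fin_cases j <;> simp [σX]
theorem σY_mul_self : σY * σY = 1 := by ext i j; fin_cases i <;> fin_cases j <;> simp [σY]
theorem σZ_mul_self : σZ * σZ = 1 := by ext i j; fin_cases i <;> fin_cases j <;> simp [σZ]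

theorem isSelfAdjoint_σX : IsSelfAdjoint σX := by
  ext i j; fin_cases i <;> fin_cases j <;> simp [σX]
theorem isSelfAdjoint_σY : IsSelfAdjoint σY := by
  ext i j; fin_cases i <;> fin_cases j <;> simp [σY]
theorem isSelfAdjoint_σZ : IsSelfAdjoint σZ := by
  ext i j; fin_cases i <;> fin_cases j <;> simp [σZ]

theorem σZ_mul_σY : σZ * σY = -(σY * σZ) := by
  ext i j; fin_cases i <;> fin_cases j <;> simp [σY, σZ]
theorem σZ_mul_σX : σZ * σX = -(σX * σZ) := by
  ext i j; fin_cases i <;> fin_cases j <;> simp [σX, σZ]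
theorem σY_mul_σX : σY * σX = -(σX * σY) := by
  ext i j; fin_cases i <;> fin_cases j <;> simp [σX, σY]

theorem I_smul_σZ_mul_σY : I • (σZ * σY) = σX := by
  ext i j; fin_cases i <;> fin_cases j <;> simp [σX, σY, σZ]
theorem I_smul_σZ_mul_σX : I • (σZ * σX) = -σY := by
  ext i j; fin_cases i <;> fin_cases j <;> simp [σX, σY, σZ]
theorem I_smul_σY_mul_σX : I • (σY * σX) = σZ := by
  ext i j; fin_cases i <;> fin_cases j <;> simp [σX, σY, σZ]

theorem range_fin_three {α : Type*} (f : Fin 3 → α) : Set.range f = {f 0, f 1, f 2} := by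
  simp [Fin.range_fin_succ, Fin.tail]

def su2Basis : Fin 3 → Matrix (Fin 2) (Fin 2) ℂ := ![I • σX, I • σY, I • σZ]

theorem linearIndependent_su2Basis : LinearIndependent ℝ su2Basis := by
  refine Fintype.linearIndependent_iff.mpr fun g hg => ?_
  -- the `(0, 0)` and `(0, 1)` entries of `∑ i, g i • su2Basis i` are `i g₂` and `g₁ + i g₀`
  have h₂ : g 2 = 0 := by
    simpa [su2Basis, Fin.sum_univ_three, σX, σY, σZ, Complex.ext_iff] using congrFun₂ hg 0 0
  obtain ⟨h₁, h₀⟩ : g 1 = 0 ∧ g 0 = 0 := by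
    simpa [su2Basis, Fin.sum_univ_three, σX, σY, σZ, Complex.ext_iff] using congrFun₂ hg 0 1
  intro i
  fin_cases i <;> assumption

def omegaCoeff (φ₁ φ₂ : ℝ) : Matrix (Fin 3) (Fin 3) ℝ :=
  !![0, 0, -1;
    -Real.sin (2 * φ₁), -Real.cos (2 * φ₁), 0;
    -(Real.cos (2 * φ₂) * Real.cos (2 * φ₁)), Real.cos (2 * φ₂) * Real.sin (2 * φ₁),
      -Real.sin (2 * φ₂)]

theorem det_omegaCoeff (φ₁ φ₂ : ℝ) : (omegaCoeff φ₁ φ₂).det = Real.cos (2 * φ₂) := by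
  simp only [omegaCoeff, det_fin_three, of_apply, cons_val', cons_val_zero, cons_val_one, cons_val,
    cons_val_fin_one]
  linear_combination Real.cos (2 * φ₂) * Real.sin_sq_add_cos_sq (2 * φ₁)

section Ansatz

variable (φ₁ φ₂ φ₃ : ℝ)

theorem G_eq_pauliExp : G φ₁ φ₂ φ₃ = pauliExp σX φ₃ * pauliExp σY φ₂ * pauliExp σZ φ₁ := rfl

theorem hasDerivAt_G₁ :
    HasDerivAt (fun t => G t φ₂ φ₃)
      (pauliExp σX φ₃ * pauliExp σY φ₂ * (pauliExp σZ φ₁ * (-I • σZ))) φ₁ :=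
  (hasDerivAt_pauliExp σZ φ₁).const_mul _

theorem hasDerivAt_G₂ :
    HasDerivAt (fun t => G φ₁ t φ₃)
      (pauliExp σX φ₃ * (pauliExp σY φ₂ * (-I • σY)) * pauliExp σZ φ₁) φ₂ :=
  ((hasDerivAt_pauliExp σY φ₂).const_mul _).mul_const _

theorem hasDerivAt_G₃ :
    HasDerivAt (fun t => G φ₁ φ₂ t)
      (pauliExp σX φ₃ * (-I • σX) * pauliExp σY φ₂ * pauliExp σZ φ₁) φ₃ :=
  ((hasDerivAt_pauliExp σX φ₃).mul_const _).mul_const _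

theorem conjTranspose_G_mul_deriv₁ :
    (G φ₁ φ₂ φ₃)ᴴ * (pauliExp σX φ₃ * pauliExp σY φ₂ * (pauliExp σZ φ₁ * (-I • σZ))) =
      (-1 : ℝ) • (I • σZ) := by
  rw [G_eq_pauliExp, ← star_eq_conjTranspose]
  simp only [star_mul, mul_assoc, star_pauliExp_mul_cancel_left σX_mul_self isSelfAdjoint_σX,
    star_pauliExp_mul_cancel_left σY_mul_self isSelfAdjoint_σY,
    star_pauliExp_mul_cancel_left σZ_mul_self isSelfAdjoint_σZ]
  module

theorem conjTranspose_G_mul_deriv₂ :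
    (G φ₁ φ₂ φ₃)ᴴ * (pauliExp σX φ₃ * (pauliExp σY φ₂ * (-I • σY)) * pauliExp σZ φ₁) =
      (-Real.sin (2 * φ₁)) • (I • σX) + (-Real.cos (2 * φ₁)) • (I • σY) := by
  rw [G_eq_pauliExp, ← star_eq_conjTranspose]
  simp only [star_mul, mul_assoc, star_pauliExp_mul_cancel_left σX_mul_self isSelfAdjoint_σX,
    star_pauliExp_mul_cancel_left σY_mul_self isSelfAdjoint_σY]
  rw [smul_mul_assoc, mul_smul_comm, ← mul_assoc,
    star_pauliExp_mul_mul_pauliExp_of_anticommute σZ_mul_self isSelfAdjoint_σZ σZ_mul_σY,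
    I_smul_σZ_mul_σY]
  simp only [← coe_smul]
  module

theorem conjTranspose_G_mul_deriv₃ :
    (G φ₁ φ₂ φ₃)ᴴ * (pauliExp σX φ₃ * (-I • σX) * pauliExp σY φ₂ * pauliExp σZ φ₁) =
      (-(Real.cos (2 * φ₂) * Real.cos (2 * φ₁))) • (I • σX) +
        (Real.cos (2 * φ₂) * Real.sin (2 * φ₁)) • (I • σY) + (-Real.sin (2 * φ₂)) • (I • σZ) := by
  calc _ = -I • (star (pauliExp σZ φ₁) * (star (pauliExp σY φ₂) * σX * pauliExp σY φ₂) *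
        pauliExp σZ φ₁) := by
        rw [G_eq_pauliExp, ← star_eq_conjTranspose]
        simp only [star_mul, mul_assoc, smul_mul_assoc, mul_smul_comm,
          star_pauliExp_mul_cancel_left σX_mul_self isSelfAdjoint_σX]
    _ = _ := by
      rw [star_pauliExp_mul_mul_pauliExp_of_anticommute σY_mul_self isSelfAdjoint_σY σY_mul_σX,
        I_smul_σY_mul_σX]
      simp only [add_mul, mul_add, smul_mul_assoc, mul_smul_comm,
        star_pauliExp_mul_mul_pauliExp_of_anticommute σZ_mul_self isSelfAdjoint_σZ σZ_mul_σX,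
        star_pauliExp_mul_self_mul_pauliExp σZ_mul_self isSelfAdjoint_σZ, I_smul_σZ_mul_σX,
        ← coe_smul]
      push_cast
      module

end Ansatz

/-- The pulled-back derivatives `Ω_j(φ) = G(φ)† ∂G/∂φ_j` of the single-qubit
ansatz span `su(2)` (the real span of `iσ_X, iσ_Y, iσ_Z`) iff `cos(2φ₂) ≠ 0`. -/
theorem single_qubit_omegas_span_iff_cos_ne_zero
    (φ₁ φ₂ φ₃ : ℝ) (D₁ D₂ D₃ : Matrix (Fin 2) (Fin 2) ℂ)
    (h₁ : HasDerivAt (fun t => G t φ₂ φ₃) D₁ φ₁)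
    (h₂ : HasDerivAt (fun t => G φ₁ t φ₃) D₂ φ₂)
    (h₃ : HasDerivAt (fun t => G φ₁ φ₂ t) D₃ φ₃) :
    Submodule.span ℝ
        ({(G φ₁ φ₂ φ₃)ᴴ * D₁, (G φ₁ φ₂ φ₃)ᴴ * D₂, (G φ₁ φ₂ φ₃)ᴴ * D₃} :
          Set (Matrix (Fin 2) (Fin 2) ℂ)) =
      Submodule.span ℝ
        ({Complex.I • σX, Complex.I • σY, Complex.I • σZ} : Set (Matrix (Fin 2) (Fin 2) ℂ)) ↔
      Real.cos (2 * φ₂) ≠ 0 := by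
  have key := span_range_sum_smul_eq_iff_isUnit_det linearIndependent_su2Basis (omegaCoeff φ₁ φ₂)
  rw [range_fin_three, range_fin_three, det_omegaCoeff, isUnit_iff_ne_zero] at key
  rw [h₁.unique (hasDerivAt_G₁ φ₁ φ₂ φ₃), h₂.unique (hasDerivAt_G₂ φ₁ φ₂ φ₃),
    h₃.unique (hasDerivAt_G₃ φ₁ φ₂ φ₃), conjTranspose_G_mul_deriv₁, conjTranspose_G_mul_deriv₂,
    conjTranspose_G_mul_deriv₃]
  simpa [omegaCoeff, su2Basis, Fin.sum_univ_three] using key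

end
end

section
/- Let H be a Hermitian d×d matrix with eigenvalues E₁ ≤ E₂ ≤ ⋯ ≤ E_d and orthonormal eigenvectors |E_k⟩. Let |ψ⟩ = |E_m⟩ be an eigenstate and define for k < l the quantity h_{k,l} = ½ (E_k − E_l)(|⟨ψ|E_l⟩|² − |⟨ψ|E_k⟩|²). If m = 1 (ground state), then h_{k,l} ≥ 0 for all k < l; if E_m > E₁ and E₁ < E_d, then there exist k < l with h_{k,l} < 0. -/
open Matrix

/-- Let `H` be Hermitian with eigenvalues `E₀ ≤ … ≤ E_d` and orthonormal
eigenvectors `V k`, and let `ψ = V m`.  For `k < l` set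
`h k l = ½ (E k − E l)(|⟨ψ|V l⟩|² − |⟨ψ|V k⟩|²)`.  If `m = 0` (ground state) then
`h k l ≥ 0` for all `k < l`; if `E m > E 0` and `E 0 < E_max`, then some `h k l < 0`. -/
theorem hessian_diagonal_signs
    {d : ℕ} (H : Matrix (Fin (d + 1)) (Fin (d + 1)) ℂ) (hH : H.IsHermitian)
    (E : Fin (d + 1) → ℝ) (hE : Monotone E)
    (V : Fin (d + 1) → (Fin (d + 1) → ℂ))
    (horth : ∀ i j, star (V i) ⬝ᵥ V j = if i = j then 1 else 0)
    (heig : ∀ i, H.mulVec (V i) = (E i : ℂ) • V i)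
    (m : Fin (d + 1)) :
    (m = 0 → ∀ k l : Fin (d + 1), k < l →
        0 ≤ (1 / 2 : ℝ) * (E k - E l) *
          (‖star (V m) ⬝ᵥ V l‖ ^ 2 - ‖star (V m) ⬝ᵥ V k‖ ^ 2)) ∧
    ((E 0 < E m ∧ E 0 < E (Fin.last d)) → ∃ k l : Fin (d + 1), k < l ∧
        (1 / 2 : ℝ) * (E k - E l) *
          (‖star (V m) ⬝ᵥ V l‖ ^ 2 - ‖star (V m) ⬝ᵥ V k‖ ^ 2) < 0) := by
  have hn : ∀ j : Fin (d + 1), ‖star (V m) ⬝ᵥ V j‖ ^ 2 = if m = j then 1 else 0 := by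
    intro j
    rw [horth m j]
    by_cases h : m = j <;> simp [h]
  constructor
  · rintro rfl k l hkl
    rw [hn k, hn l]
    have hl : ¬ (0 : Fin (d + 1)) = l := by
      intro h; exact absurd hkl (by rw [← h]; exact (Fin.le_def.mpr (Nat.zero_le _)).not_gt)
    by_cases hk : (0 : Fin (d + 1)) = k
    · rw [if_neg hl, if_pos hk]
      have : E (0 : Fin (d+1)) ≤ E l := hE (Fin.le_def.mpr (Nat.zero_le _))
      rw [← hk]
      nlinarith
    · rw [if_neg hl, if_neg hk]
      simp
  · rintro ⟨h1, _⟩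
    refine ⟨0, m, ?_, ?_⟩
    · by_contra h
      have : m ≤ 0 := not_lt.mp h
      exact absurd h1 (by have := hE this; linarith)
    · rw [hn 0, hn m]
      have hm0 : ¬ m = 0 := by rintro rfl; exact lt_irrefl _ h1
      rw [if_neg hm0, if_pos rfl]
      nlinarith
end

section
/- Let X_1, …, X_M with M > d² − 1 span the (d²−1)-dimensional space su(d), and define W(θ) = exp(Σ_j θ_j X_j). Then there exists θ ∈ ℝ^M at which the differential of W has rank strictly less than d² − 1; i.e., the overparameterized SU(d)-gate ansatz has singular points. -/
open Matrix
open scoped Matrix.Norms.L2Operator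

/-!
Pick `A = diag(2πi, -2πi, 0, …, 0) ∈ su(d)`, so that `exp A = 1`. Conjugating `A` by the
one-parameter group `exp (t • u)` gives a curve in `su(d)` through `A` on which `exp` is constant,
so the differential of `exp` at `A` kills its velocity `[u, A]`, which is nonzero for a suitable
`u ∈ su(d)`. Since the `X j` span `su(d)`, the differential of `W` at any `θ` with `Σ θ j X j = A`
has range `D exp_A (su(d))`, of dimension at most `dim su(d) - 1 < d² - 1`.
-/

open NormedSpace

theorem Submodule.finrank_map_lt_of_mem_ker {K V W : Type*} [DivisionRing K] [AddCommGroup V]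
    [Module K V] [AddCommGroup W] [Module K W] (p : Submodule K V) [FiniteDimensional K p]
    (f : V →ₗ[K] W) {x : V} (hx : x ∈ p) (hx0 : x ≠ 0) (hfx : f x = 0) :
    Module.finrank K (p.map f) < Module.finrank K p := by
  have hker : 0 < Module.finrank K (LinearMap.ker (f ∘ₗ p.subtype)) := by
    refine Nat.pos_of_ne_zero fun h => hx0 ?_
    have := LinearMap.ker_eq_bot'.mp (Submodule.finrank_eq_zero.mp h) ⟨x, hx⟩ hfx
    simpa using congrArg Subtype.val this
  have := (f ∘ₗ p.subtype).finrank_range_add_finrank_ker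
  rw [LinearMap.range_comp, Submodule.range_subtype] at this
  omega

theorem range_fderiv_comp_linearCombination {ι 𝕜 F G : Type*} [Fintype ι]
    [NontriviallyNormedField 𝕜] [CompleteSpace 𝕜] [NormedAddCommGroup F] [NormedSpace 𝕜 F]
    [NormedAddCommGroup G] [NormedSpace 𝕜 G] (X : ι → F) {f : F → G} {θ : ι → 𝕜}
    (hf : DifferentiableAt 𝕜 f (∑ j, θ j • X j)) :
    LinearMap.range (fderiv 𝕜 (fun θ : ι → 𝕜 => f (∑ j, θ j • X j)) θ).toLinearMap =
      (Submodule.span 𝕜 (Set.range X)).map (fderiv 𝕜 f (∑ j, θ j • X j)).toLinearMap := by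
  let L := (Fintype.linearCombination 𝕜 X).toContinuousLinearMap
  have hL : ∀ θ, L θ = ∑ j, θ j • X j := Fintype.linearCombination_apply 𝕜 X
  have hfL : (fun θ => f (∑ j, θ j • X j)) = f ∘ L := funext fun θ => by simp [hL]
  rw [hfL, fderiv_comp θ (hL θ ▸ hf) L.differentiableAt, L.fderiv,
    ContinuousLinearMap.toLinearMap_comp, LinearMap.range_comp,
    LinearMap.coe_toContinuousLinearMap, Fintype.range_linearCombination, hL]

theorem fderiv_exp_apply_commutator_eq_zero {𝔸 : Type*} [NormedRing 𝔸] [NormedAlgebra ℝ 𝔸]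
    [CompleteSpace 𝔸] {A u : 𝔸} (h : Commute (exp A) u) :
    fderiv ℝ exp A (u * A - A * u) = 0 := by
  let : NormedAlgebra ℚ 𝔸 := NormedAlgebra.restrictScalars ℚ ℝ 𝔸
  -- conjugating `A` by `exp (t • u)` moves it with velocity `u * A - A * u` but fixes `exp A`
  let c : ℝ → 𝔸 := fun t => exp (t • u) * A * exp (t • -u)
  have hc : HasDerivAt c (u * A - A * u) 0 := by
    have := ((hasDerivAt_exp_smul_const u (0 : ℝ)).mul_const A).mul
      (hasDerivAt_exp_smul_const (-u) (0 : ℝ))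
    simpa [c, Pi.mul_def, mul_neg, sub_eq_add_neg, smul_neg] using this
  have hc_exp : ∀ t, exp (c t) = exp A := fun t => by
    let U : 𝔸ˣ := ⟨exp (t • u), exp (t • -u),
      by rw [smul_neg, ← NormedSpace.exp_add_of_commute (Commute.refl _).neg_right,
        add_neg_cancel, exp_zero],
      by rw [smul_neg, ← NormedSpace.exp_add_of_commute (Commute.refl _).neg_left,
        neg_add_cancel, exp_zero]⟩
    calc exp (c t) = U * exp A * ↑U⁻¹ := NormedSpace.exp_units_conj U A
      _ = exp A * U * ↑U⁻¹ := by rw [((h.smul_right t).exp_right).eq]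
      _ = exp A := by rw [mul_assoc, Units.mul_inv, mul_one]
  have hc0 : c 0 = A := by simp [c]
  have hexp : HasFDerivAt exp (fderiv ℝ exp (c 0)) (c 0) :=
    (exp_analytic (𝕂 := ℝ) (c 0)).differentiableAt.hasFDerivAt
  have hconst : HasDerivAt (exp ∘ c) 0 0 := by
    rw [show exp ∘ c = fun _ => exp A from funext hc_exp]
    exact hasDerivAt_const _ _
  simpa [hc0] using (hexp.comp_hasDerivAt 0 hc).unique hconst

theorem Matrix.exp_diagonal_intCast_mul_two_pi_I {n : Type*} [Fintype n] [DecidableEq n]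
    (z : n → ℤ) : exp (diagonal fun k => (z k : ℂ) * (2 * Real.pi * Complex.I)) = 1 := by
  rw [exp_diagonal, ← diagonal_one]
  congr 1
  ext k
  simp [← Complex.exp_eq_exp_ℂ, Complex.exp_int_mul_two_pi_mul_I]

theorem Matrix.finrank_skewAdjoint_le {n : Type*} [Fintype n] :
    Module.finrank ℝ (skewAdjoint.submodule ℝ (Matrix n n ℂ)) ≤ Fintype.card n ^ 2 := by
  -- entrywise `re + im` is injective on skew-Hermitian matrices, as `B j i = -conj (B i j)`
  let φ := (Complex.reLm + Complex.imLm).mapMatrix.comp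
    (skewAdjoint.submodule ℝ (Matrix n n ℂ)).subtype
  have hφ : Function.Injective φ := by
    rw [← LinearMap.ker_eq_bot, LinearMap.ker_eq_bot']
    rintro ⟨B, hB⟩ hφB
    have hB' : ∀ i j, star (B j i) = -B i j := fun i j => by
      simpa using congr_fun₂ (show Bᴴ = -B from hB) i j
    ext i j
    have hij : (B i j).re + (B i j).im = 0 := by simpa [φ] using congr_fun₂ hφB i j
    have hji : (B j i).re + (B j i).im = 0 := by simpa [φ] using congr_fun₂ hφB j i
    have hre : (B j i).re = -(B i j).re := by simpa using congrArg Complex.re (hB' i j)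
    have him : (B j i).im = (B i j).im := by simpa using congrArg Complex.im (hB' i j)
    apply Complex.ext <;>
      simp only [ZeroMemClass.coe_zero, Matrix.zero_apply, Complex.zero_re, Complex.zero_im] <;>
      linarith
  simpa [Module.finrank_matrix, sq] using LinearMap.finrank_le_finrank_of_injective hφ

noncomputable def specialUnitaryLieAlgebra (n : Type*) [Fintype n] : Submodule ℝ (Matrix n n ℂ) :=
  skewAdjoint.submodule ℝ (Matrix n n ℂ) ⊓ LinearMap.ker (traceLinearMap n ℝ ℂ)

namespace specialUnitaryLieAlgebra

variable {n : Type*} [Fintype n]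

theorem mem_iff {B : Matrix n n ℂ} :
    B ∈ specialUnitaryLieAlgebra n ↔ Bᴴ = -B ∧ B.trace = 0 :=
  Iff.rfl

theorem mul_sub_mul_mem {A B : Matrix n n ℂ} (hA : A ∈ skewAdjoint.submodule ℝ (Matrix n n ℂ))
    (hB : B ∈ skewAdjoint.submodule ℝ (Matrix n n ℂ)) :
    A * B - B * A ∈ specialUnitaryLieAlgebra n := by
  have hA : Aᴴ = -A := hA
  have hB : Bᴴ = -B := hB
  refine mem_iff.mpr ⟨?_, by rw [trace_sub, trace_mul_comm, sub_self]⟩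
  rw [conjTranspose_sub, conjTranspose_mul, conjTranspose_mul, hA, hB]
  noncomm_ring

variable [DecidableEq n]

theorem finrank_lt [Nonempty n] :
    Module.finrank ℝ (specialUnitaryLieAlgebra n) < Fintype.card n ^ 2 := by
  refine lt_of_lt_of_le (Submodule.finrank_lt_finrank_of_lt ?_) finrank_skewAdjoint_le
  refine SetLike.lt_iff_le_and_exists.mpr ⟨inf_le_left, Complex.I • 1, ?_, fun h => ?_⟩
  · show (Complex.I • 1 : Matrix n n ℂ)ᴴ = -(Complex.I • 1)
    simp
  · simpa [Fintype.card_ne_zero] using (mem_iff.mp h).2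

theorem diagonal_intCast_mul_two_pi_I_mem {z : n → ℤ} (hz : ∑ k, z k = 0) :
    diagonal (fun k => (z k : ℂ) * (2 * Real.pi * Complex.I)) ∈ specialUnitaryLieAlgebra n := by
  refine mem_iff.mpr ⟨?_, ?_⟩
  · rw [diagonal_conjTranspose, diagonal_neg]
    congr 1
    funext k
    simp
  · rw [trace_diagonal, ← Finset.sum_mul]
    exact_mod_cast (by simp [hz] : ((∑ k, z k : ℤ) : ℂ) * (2 * Real.pi * Complex.I) = 0)

theorem exists_fderiv_exp_apply_eq_zero [Nontrivial n] :
    ∃ A ∈ specialUnitaryLieAlgebra n, ∃ B ∈ specialUnitaryLieAlgebra n,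
      B ≠ 0 ∧ fderiv ℝ exp A B = 0 := by
  obtain ⟨i, j, hij⟩ := exists_pair_ne n
  set z : n → ℤ := Pi.single i 1 - Pi.single j 1
  set A := diagonal fun k => (z k : ℂ) * (2 * Real.pi * Complex.I)
  set u : Matrix n n ℂ := single i j 1 - single j i 1
  have hA : A ∈ specialUnitaryLieAlgebra n := diagonal_intCast_mul_two_pi_I_mem (by simp [z])
  have hu : u ∈ skewAdjoint.submodule ℝ (Matrix n n ℂ) := by
    show uᴴ = -u
    simp [u, conjTranspose_single]
  have hexpA : Commute (exp A) u := (exp_diagonal_intCast_mul_two_pi_I z).symm ▸ .one_left u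
  refine ⟨A, hA, u * A - A * u, mul_sub_mul_mem hu hA.1, fun h => ?_,
    fderiv_exp_apply_commutator_eq_zero hexpA⟩
  have hentry : (u * A - A * u) i j = -(4 * Real.pi * Complex.I) := by
    simp only [Matrix.sub_apply, mul_diagonal, diagonal_mul, single_apply_same, single_apply_of_ne,
      ne_eq, hij, hij.symm, not_false_eq_true, and_self, Pi.sub_apply, Pi.single_eq_same,
      Pi.single_eq_of_ne, u, A, z]
    push_cast
    ring
  rw [h, Matrix.zero_apply] at hentry
  simp [Real.pi_ne_zero] at hentry

end specialUnitaryLieAlgebra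

theorem overparameterized_su_gate_ansatz_has_singular_points_general
    {d M : ℕ} (hd : 2 ≤ d)
    (X : Fin M → Matrix (Fin d) (Fin d) ℂ)
    (hskew : ∀ j, (X j)ᴴ = -(X j)) (htr : ∀ j, (X j).trace = 0)
    (hspan : ∀ A : Matrix (Fin d) (Fin d) ℂ, Aᴴ = -A → A.trace = 0 →
      A ∈ Submodule.span ℝ (Set.range X)) :
    ∃ θ : Fin M → ℝ,
      Module.finrank ℝ
          (LinearMap.range
            (fderiv ℝ
              (fun θ : Fin M → ℝ => NormedSpace.exp (∑ j, θ j • X j)) θ).toLinearMap) <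
        d ^ 2 - 1 := by
  have : Nontrivial (Fin d) := Fin.nontrivial_iff_two_le.mpr hd
  have hsu : Submodule.span ℝ (Set.range X) = specialUnitaryLieAlgebra (Fin d) :=
    le_antisymm (Submodule.span_le.mpr (Set.range_subset_iff.mpr fun j => ⟨hskew j, htr j⟩))
      fun A hA => hspan A hA.1 hA.2
  obtain ⟨A, hA, B, hB, hB0, hAB⟩ :=
    specialUnitaryLieAlgebra.exists_fderiv_exp_apply_eq_zero (n := Fin d)
  obtain ⟨θ, rfl⟩ := (Submodule.mem_span_range_iff_exists_fun ℝ).mp (hsu ▸ hA)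
  refine ⟨θ, ?_⟩
  rw [range_fderiv_comp_linearCombination X ((exp_analytic (𝕂 := ℝ) _).differentiableAt), hsu]
  have hlt := (specialUnitaryLieAlgebra (Fin d)).finrank_map_lt_of_mem_ker _ hB hB0 hAB
  have hdim := specialUnitaryLieAlgebra.finrank_lt (n := Fin d)
  rw [Fintype.card_fin] at hdim
  omega

/-- Let `X₁, …, X_M` with `M > d² − 1` span the `(d²−1)`-dimensional Lie
algebra `su(d)` of traceless skew-Hermitian matrices, and let
`W(θ) = exp(Σ_j θ_j X_j)`.  Then there is a point `θ` at which the differential of `W` has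
rank strictly less than `d² − 1`: the overparameterized `SU(d)`-gate ansatz has singular
points. -/
theorem overparameterized_su_gate_ansatz_has_singular_points
    {d M : ℕ} (hd : 2 ≤ d) (hM : d ^ 2 - 1 < M)
    (X : Fin M → Matrix (Fin d) (Fin d) ℂ)
    (hskew : ∀ j, (X j)ᴴ = -(X j)) (htr : ∀ j, (X j).trace = 0)
    (hspan : ∀ A : Matrix (Fin d) (Fin d) ℂ, Aᴴ = -A → A.trace = 0 →
      A ∈ Submodule.span ℝ (Set.range X)) :
    ∃ θ : Fin M → ℝ,
      Module.finrank ℝ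
          (LinearMap.range
            (fderiv ℝ
              (fun θ : Fin M → ℝ => NormedSpace.exp (∑ j, θ j • X j)) θ).toLinearMap) <
        d ^ 2 - 1 :=
  overparameterized_su_gate_ansatz_has_singular_points_general hd X hskew htr hspan
end

section
/- Let X_1, …, X_{d²−1} be a basis of su(d) and V(θ, φ) = exp(X(θ)) exp(X(φ)). If φ_s is a singular point of the map φ ↦ exp(X(φ)), then (φ_s, φ_s) is a singular point of V: the pulled-back partial derivatives of V at (φ_s, φ_s) do not span su(d). -/
open Matrix
open scoped Matrix.Norms.L2Operator

/-!
Write `E = exp S`. Since `S` commutes with `E`, conjugation `h ↦ E⁻¹ h E` fixes `S` and commutes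
with `exp`, so by the chain rule it commutes with the derivative `D` of `exp` at `S`. The
pulled-back derivatives of `V` at `(φ_s, φ_s)` are `E⁻¹ E⁻¹ (D X_j) E = E⁻¹ D(E⁻¹ X_j E)` and
`E⁻¹ E⁻¹ E (D X_j) = E⁻¹ D X_j`. As `su(d)` is stable under conjugation by the unitary `E`, both
lie in `E⁻¹ D(su(d))`, the span of the pulled-back derivatives of `φ ↦ exp(X(φ))` at `φ_s`.
-/

open NormedSpace

theorem fderiv_comp_linearCombination_single {𝕜 ι M F : Type*} [NontriviallyNormedField 𝕜]
    [Fintype ι] [DecidableEq ι] [NormedAddCommGroup M] [NormedSpace 𝕜 M]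
    [NormedAddCommGroup F] [NormedSpace 𝕜 F] (v : ι → M) {f : M → F} {φ : ι → 𝕜}
    (hf : DifferentiableAt 𝕜 f (∑ i, φ i • v i)) (j : ι) :
    fderiv 𝕜 (fun φ : ι → 𝕜 => f (∑ i, φ i • v i)) φ (Pi.single j 1) =
      fderiv 𝕜 f (∑ i, φ i • v i) (v j) := by
  let T : (ι → 𝕜) →L[𝕜] M := ∑ i, (ContinuousLinearMap.proj i).smulRight (v i)
  have hT : ∀ ψ, T ψ = ∑ i, ψ i • v i := fun ψ => by simp [T]
  have hfT : (fun φ : ι → 𝕜 => f (∑ i, φ i • v i)) = f ∘ T := funext fun ψ => by simp [hT]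
  rw [hfT, fderiv_comp φ (by rwa [hT]) T.differentiableAt, T.fderiv,
    ContinuousLinearMap.comp_apply, hT, hT]
  simp [Pi.single_apply]

theorem fderiv_mul_fst_snd {𝕜 E 𝔸 : Type*} [NontriviallyNormedField 𝕜] [NormedAddCommGroup E]
    [NormedSpace 𝕜 E] [NormedRing 𝔸] [NormedAlgebra 𝕜 𝔸] {f g : E → 𝔸} {x y : E}
    (hf : DifferentiableAt 𝕜 f x) (hg : DifferentiableAt 𝕜 g y) (v w : E) :
    fderiv 𝕜 (fun p : E × E => f p.1 * g p.2) (x, y) (v, w) =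
      fderiv 𝕜 f x v * g y + f x * fderiv 𝕜 g y w := by
  have hf₁ : HasFDerivAt (fun p : E × E => f p.1) ((fderiv 𝕜 f x).comp (.fst 𝕜 E E)) (x, y) :=
    hf.hasFDerivAt.comp (x, y) hasFDerivAt_fst
  have hg₂ : HasFDerivAt (fun p : E × E => g p.2) ((fderiv 𝕜 g y).comp (.snd 𝕜 E E)) (x, y) :=
    hg.hasFDerivAt.comp (x, y) hasFDerivAt_snd
  rw [(hf₁.fun_mul' hg₂).fderiv]
  simp [add_comm]

section RatAlgebra

variable {𝔸 : Type*} [NormedRing 𝔸] [NormedAlgebra ℚ 𝔸] [CompleteSpace 𝔸]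

theorem exp_neg_mul_exp_self (x : 𝔸) : exp (-x) * exp x = 1 := by
  rw [← exp_add_of_commute (Commute.refl x).neg_left, neg_add_cancel, exp_zero]

theorem exp_mul_exp_neg_self (x : 𝔸) : exp x * exp (-x) = 1 := by
  simpa using exp_neg_mul_exp_self (-x)

end RatAlgebra

section BanachAlgebra

variable (𝕂 : Type*) {𝔸 : Type*} [RCLike 𝕂] [NormedRing 𝔸] [NormedAlgebra 𝕂 𝔸]

/-- The paper's pulled-back derivative: `Ω_j(φ) = leftTrivFDerivExp 𝕂 (X(φ)) X_j`. -/
noncomputable def leftTrivFDerivExp (x : 𝔸) : 𝔸 →L[𝕂] 𝔸 :=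
  (ContinuousLinearMap.mul 𝕂 𝔸 (exp (-x))).comp (fderiv 𝕂 exp x)

theorem leftTrivFDerivExp_apply (x h : 𝔸) :
    leftTrivFDerivExp 𝕂 x h = exp (-x) * fderiv 𝕂 exp x h :=
  rfl

variable [CompleteSpace 𝔸]

theorem fderiv_exp_units_conj (u : 𝔸ˣ) {x : 𝔸} (hux : Commute (u : 𝔸) x) (h : 𝔸) :
    fderiv 𝕂 exp x (↑u⁻¹ * h * u) = ↑u⁻¹ * fderiv 𝕂 exp x h * u := by
  let +nondep : NormedAlgebra ℚ 𝔸 := .restrictScalars ℚ 𝕂 𝔸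
  let c : 𝔸 →L[𝕂] 𝔸 := .mulLeftRight 𝕂 𝔸 ↑u⁻¹ u
  have hc : ∀ y, c y = ↑u⁻¹ * y * u := fun _ => rfl
  have hcx : c x = x := by rw [hc, hux.units_inv_left.eq, mul_assoc, Units.inv_mul, mul_one]
  have hexp : HasFDerivAt exp (fderiv 𝕂 exp x) x :=
    (exp_analytic x).differentiableAt.hasFDerivAt
  have hcomm : exp ∘ c = c ∘ exp := funext fun y => exp_units_conj' u y
  have h₁ : HasFDerivAt (exp ∘ c) ((fderiv 𝕂 exp x).comp c) x :=
    HasFDerivAt.comp x (by rwa [hcx]) c.hasFDerivAt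
  have h₂ : HasFDerivAt (c ∘ exp) (c.comp (fderiv 𝕂 exp x)) x := c.hasFDerivAt.comp x hexp
  rw [← hc, ← hc]
  exact DFunLike.congr_fun ((hcomm ▸ h₁).unique h₂) h

theorem exp_neg_mul_exp_neg_mul_fderiv_exp_mul_exp (x h : 𝔸) :
    exp (-x) * exp (-x) * (fderiv 𝕂 exp x h * exp x) =
      leftTrivFDerivExp 𝕂 x (exp (-x) * h * exp x) := by
  let +nondep : NormedAlgebra ℚ 𝔸 := .restrictScalars ℚ 𝕂 𝔸
  let u : 𝔸ˣ := ⟨exp x, exp (-x), exp_mul_exp_neg_self x, exp_neg_mul_exp_self x⟩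
  have hconj : fderiv 𝕂 exp x (exp (-x) * h * exp x) = exp (-x) * fderiv 𝕂 exp x h * exp x :=
    fderiv_exp_units_conj 𝕂 u (Commute.refl x).exp_left h
  rw [leftTrivFDerivExp_apply, hconj]
  simp only [mul_assoc]

theorem exp_neg_mul_exp_neg_mul_exp_mul_fderiv_exp (x h : 𝔸) :
    exp (-x) * exp (-x) * (exp x * fderiv 𝕂 exp x h) = leftTrivFDerivExp 𝕂 x h := by
  let +nondep : NormedAlgebra ℚ 𝔸 := .restrictScalars ℚ 𝕂 𝔸
  rw [leftTrivFDerivExp_apply, mul_assoc, ← mul_assoc (exp (-x)) (exp x), exp_neg_mul_exp_self,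
    one_mul]

end BanachAlgebra

section MatrixConj

variable {n : Type*} [Fintype n] [DecidableEq n]

theorem Matrix.conjTranspose_exp_neg_mul_mul_exp {𝔸 : Type*} [Ring 𝔸] [StarRing 𝔸]
    [TopologicalSpace 𝔸] [IsTopologicalRing 𝔸] [T2Space 𝔸] [ContinuousStar 𝔸]
    {S A : Matrix n n 𝔸} (hS : Sᴴ = -S) (hA : Aᴴ = -A) :
    (exp (-S) * A * exp S)ᴴ = -(exp (-S) * A * exp S) := by
  rw [conjTranspose_mul, conjTranspose_mul, ← exp_conjTranspose, ← exp_conjTranspose,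
    conjTranspose_neg, hS, hA, neg_neg]
  simp only [mul_neg, neg_mul, mul_assoc]

theorem Matrix.trace_exp_neg_mul_mul_exp {𝔸 : Type*} [NormedCommRing 𝔸] [NormedAlgebra ℚ 𝔸]
    [CompleteSpace 𝔸] (S A : Matrix n n 𝔸) : (exp (-S) * A * exp S).trace = A.trace := by
  rw [trace_mul_cycle, ← Matrix.exp_add_of_commute _ _ (Commute.refl S).neg_right,
    add_neg_cancel, exp_zero, one_mul]

end MatrixConj

theorem product_of_two_exponentials_inherits_singular_point_general
    {d : ℕ} (X : Fin (d ^ 2 - 1) → Matrix (Fin d) (Fin d) ℂ)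
    (hskew : ∀ j, (X j)ᴴ = -(X j)) (htr : ∀ j, (X j).trace = 0)
    (hspan : ∀ A : Matrix (Fin d) (Fin d) ℂ, Aᴴ = -A → A.trace = 0 →
      A ∈ Submodule.span ℝ (Set.range X))
    (φs : Fin (d ^ 2 - 1) → ℝ)
    (hsing : ∃ A : Matrix (Fin d) (Fin d) ℂ, Aᴴ = -A ∧ A.trace = 0 ∧
      A ∉ Submodule.span ℝ (Set.range fun j : Fin (d ^ 2 - 1) =>
        NormedSpace.exp (-(∑ i, φs i • X i)) *
          fderiv ℝ (fun φ : Fin (d ^ 2 - 1) → ℝ => NormedSpace.exp (∑ i, φ i • X i)) φs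
            (Pi.single j 1))) :
    ∃ A : Matrix (Fin d) (Fin d) ℂ, Aᴴ = -A ∧ A.trace = 0 ∧
      A ∉ Submodule.span ℝ (Set.range fun jk : Fin (d ^ 2 - 1) ⊕ Fin (d ^ 2 - 1) =>
        NormedSpace.exp (-(∑ i, φs i • X i)) * NormedSpace.exp (-(∑ i, φs i • X i)) *
          fderiv ℝ
            (fun p : (Fin (d ^ 2 - 1) → ℝ) × (Fin (d ^ 2 - 1) → ℝ) =>
              NormedSpace.exp (∑ i, p.1 i • X i) * NormedSpace.exp (∑ i, p.2 i • X i))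
            (φs, φs)
            (Sum.elim (fun j => ((Pi.single j 1 : Fin (d ^ 2 - 1) → ℝ), 0))
              (fun j => (0, (Pi.single j 1 : Fin (d ^ 2 - 1) → ℝ))) jk)) := by
  obtain ⟨A, hAskew, hAtr, hA⟩ := hsing
  have hexp : ∀ S : Matrix (Fin d) (Fin d) ℂ, DifferentiableAt ℝ exp S :=
    fun S => (exp_analytic S).differentiableAt
  have hdiff : DifferentiableAt ℝ (fun φ => exp (∑ i, φ i • X i)) φs :=
    (hexp _).comp φs (by fun_prop)
  simp only [fderiv_comp_linearCombination_single X (hexp _), ← leftTrivFDerivExp_apply,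
    Set.range_comp' (leftTrivFDerivExp ℝ _) X] at hA
  refine ⟨A, hAskew, hAtr, fun hmem => hA (Submodule.span_le.mpr ?_ hmem)⟩
  set S := ∑ i, φs i • X i
  have hS : Sᴴ = -S := by simp [S, conjTranspose_sum, hskew]
  rintro _ ⟨j | j, rfl⟩
  · simp only [Sum.elim_inl, fderiv_mul_fst_snd hdiff hdiff,
      fderiv_comp_linearCombination_single X (hexp _), map_zero, mul_zero, add_zero]
    rw [exp_neg_mul_exp_neg_mul_fderiv_exp_mul_exp]
    have hconj : exp (-S) * X j * exp S ∈ Submodule.span ℝ (Set.range X) :=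
      hspan _ (conjTranspose_exp_neg_mul_mul_exp hS (hskew j))
        ((trace_exp_neg_mul_mul_exp S (X j)).trans (htr j))
    exact Submodule.apply_mem_span_image_of_mem_span (leftTrivFDerivExp ℝ S).toLinearMap hconj
  · simp only [Sum.elim_inr, fderiv_mul_fst_snd hdiff hdiff,
      fderiv_comp_linearCombination_single X (hexp _), map_zero, zero_mul, zero_add]
    rw [exp_neg_mul_exp_neg_mul_exp_mul_fderiv_exp]
    exact Submodule.subset_span (Set.mem_image_of_mem _ ⟨j, rfl⟩)

/-- Let `X₁, …, X_{d²−1}` be a basis of `su(d)` and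
`V(θ, φ) = exp(X(θ)) exp(X(φ))`.  If `φ_s` is a singular point of `φ ↦ exp(X(φ))`
(the pulled-back derivatives `exp(−X(φ_s)) ∂_j exp(X(φ))` fail to span `su(d)`),
then `(φ_s, φ_s)` is a singular point of `V`: the pulled-back partial derivatives of `V`
at `(φ_s, φ_s)` do not span `su(d)`. -/
theorem product_of_two_exponentials_inherits_singular_point
    {d : ℕ} (X : Fin (d ^ 2 - 1) → Matrix (Fin d) (Fin d) ℂ)
    (hskew : ∀ j, (X j)ᴴ = -(X j)) (htr : ∀ j, (X j).trace = 0)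
    (hli : LinearIndependent ℝ X)
    (hspan : ∀ A : Matrix (Fin d) (Fin d) ℂ, Aᴴ = -A → A.trace = 0 →
      A ∈ Submodule.span ℝ (Set.range X))
    (φs : Fin (d ^ 2 - 1) → ℝ)
    (hsing : ∃ A : Matrix (Fin d) (Fin d) ℂ, Aᴴ = -A ∧ A.trace = 0 ∧
      A ∉ Submodule.span ℝ (Set.range fun j : Fin (d ^ 2 - 1) =>
        NormedSpace.exp (-(∑ i, φs i • X i)) *
          fderiv ℝ (fun φ : Fin (d ^ 2 - 1) → ℝ => NormedSpace.exp (∑ i, φ i • X i)) φs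
            (Pi.single j 1))) :
    ∃ A : Matrix (Fin d) (Fin d) ℂ, Aᴴ = -A ∧ A.trace = 0 ∧
      A ∉ Submodule.span ℝ (Set.range fun jk : Fin (d ^ 2 - 1) ⊕ Fin (d ^ 2 - 1) =>
        NormedSpace.exp (-(∑ i, φs i • X i)) * NormedSpace.exp (-(∑ i, φs i • X i)) *
          fderiv ℝ
            (fun p : (Fin (d ^ 2 - 1) → ℝ) × (Fin (d ^ 2 - 1) → ℝ) =>
              NormedSpace.exp (∑ i, p.1 i • X i) * NormedSpace.exp (∑ i, p.2 i • X i))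
            (φs, φs)
            (Sum.elim (fun j => ((Pi.single j 1 : Fin (d ^ 2 - 1) → ℝ), 0))
              (fun j => (0, (Pi.single j 1 : Fin (d ^ 2 - 1) → ℝ))) jk)) :=
  product_of_two_exponentials_inherits_singular_point_general X hskew htr hspan φs hsing
end

section
/- Let U: ℝ^M → U(d) be differentiable at θ, let H be Hermitian, ψ₀ a unit vector, and J(θ) = ⟨ψ₀| U(θ)† H U(θ) |ψ₀⟩. Then ∂J/∂θ_j = Tr{ [H, U(θ)|ψ₀⟩⟨ψ₀|U(θ)†]† · (∂_j U(θ)) U(θ)† }, i.e., the Euclidean gradient component equals the Hilbert–Schmidt inner product of the Riemannian gradient [H, |ψ(θ)⟩⟨ψ(θ)|] with the tangent direction. -/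
/-!
Write `A = U θ`, `V = ∂_j U(θ)` and `ψ = A ψ₀`. Differentiating `U Uᴴ = 1` shows that
`Ω = V Aᴴ` is skew-Hermitian, and since `Aᴴ A = 1` the derivative
`Re ⟨ψ₀, (Vᴴ H A + Aᴴ H V) ψ₀⟩` of `J` equals `Re Tr (P (Ωᴴ H + H Ω))` with `P = |ψ⟩⟨ψ|`.
For Hermitian `P` and skew-Hermitian `Ω`, cyclicity of the trace and `Re Tr Xᴴ = Re Tr X`
turn this into `Re Tr ([H, P]ᴴ Ω)`.
-/

open Matrix
open scoped Matrix.Norms.L2Operator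

theorem HasDerivAt.mul_star_mem_skewAdjoint {R : Type*} [NormedRing R] [NormedAlgebra ℝ R]
    [StarRing R] [StarModule ℝ R] [ContinuousStar R] {u : ℝ → R} {u' : R} {t : ℝ}
    (hu : ∀ s, u s ∈ unitary R) (hd : HasDerivAt u u' t) :
    u' * star (u t) ∈ skewAdjoint R := by
  have hconst : HasDerivAt (fun s => u s * star (u s)) 0 t := by
    simpa only [Unitary.mul_star_self_of_mem (hu _)] using hasDerivAt_const t (1 : R)
  have hsum : u' * star (u t) + u t * star u' = 0 := (hconst.unique (hd.mul hd.star)).symm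
  rwa [skewAdjoint.mem_iff, star_mul, star_star, eq_neg_iff_add_eq_zero, add_comm]

namespace Matrix

variable {n : Type*} [Fintype n]

theorem trace_vecMulVec_mul {α : Type*} [CommSemiring α] (x y : n → α) (B : Matrix n n α) :
    (vecMulVec x y * B).trace = y ⬝ᵥ B *ᵥ x := by
  rw [vecMulVec_mul, trace_vecMulVec, dotProduct_comm, dotProduct_mulVec]

theorem trace_vecMulVec_mulVec_star_mul {α : Type*} [CommSemiring α] [StarRing α]
    (A X : Matrix n n α) (x : n → α) :
    (vecMulVec (A *ᵥ x) (star (A *ᵥ x)) * X).trace = star x ⬝ᵥ (Aᴴ * X * A) *ᵥ x := by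
  rw [trace_vecMulVec_mul, star_mulVec, mulVec_mulVec, dotProduct_mulVec, vecMul_vecMul,
    ← dotProduct_mulVec, Matrix.mul_assoc]

theorem re_trace_commutator_conjTranspose_mul {𝕜 : Type*} [RCLike 𝕜] {P Ω : Matrix n n 𝕜}
    (hP : P.IsHermitian) (hΩ : Ωᴴ = -Ω) (H : Matrix n n 𝕜) :
    RCLike.re ((H * P - P * H)ᴴ * Ω).trace = RCLike.re (P * (Ωᴴ * H + H * Ω)).trace := by
  have re_trace_conjTranspose (X : Matrix n n 𝕜) : RCLike.re Xᴴ.trace = RCLike.re X.trace := by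
    rw [trace_conjTranspose, RCLike.star_def, RCLike.conj_re]
  have h₁ : (P * Ωᴴ * H)ᴴ.trace = (P * Hᴴ * Ω).trace := by
    rw [conjTranspose_mul, conjTranspose_mul, conjTranspose_conjTranspose, hP.eq,
      ← Matrix.mul_assoc, trace_mul_comm, Matrix.mul_assoc]
  have h₂ : (P * H * Ω)ᴴ.trace = -(Hᴴ * P * Ω).trace := by
    rw [conjTranspose_mul, conjTranspose_mul, hP.eq, hΩ, neg_mul, trace_neg,
      trace_mul_cycle, Matrix.mul_assoc]
  calc RCLike.re ((H * P - P * H)ᴴ * Ω).trace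
      = RCLike.re (P * Hᴴ * Ω).trace - RCLike.re (Hᴴ * P * Ω).trace := by
        rw [conjTranspose_sub, conjTranspose_mul, conjTranspose_mul, hP.eq, sub_mul, trace_sub,
          map_sub]
    _ = RCLike.re (P * Ωᴴ * H)ᴴ.trace + RCLike.re (P * H * Ω)ᴴ.trace := by
        rw [h₁, h₂, map_neg, sub_eq_add_neg]
    _ = RCLike.re (P * (Ωᴴ * H + H * Ω)).trace := by
        rw [re_trace_conjTranspose, re_trace_conjTranspose, mul_add, trace_add, map_add,
          Matrix.mul_assoc, Matrix.mul_assoc]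

theorem hasDerivAt_dotProduct_mulVec [DecidableEq n] (x y : n → ℂ) {m : ℝ → Matrix n n ℂ}
    {m' : Matrix n n ℂ} {t : ℝ} (hm : HasDerivAt m m' t) :
    HasDerivAt (fun s => x ⬝ᵥ m s *ᵥ y) (x ⬝ᵥ m' *ᵥ y) t := by
  let L : Matrix n n ℂ →ₗ[ℂ] ℂ :=
    { toFun := fun m => x ⬝ᵥ m *ᵥ y
      map_add' := fun a b => by simp only [add_mulVec, dotProduct_add]
      map_smul' := fun c a => by simp only [smul_mulVec, dotProduct_smul, RingHom.id_apply] }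
  exact (LinearMap.toContinuousLinearMap L |>.restrictScalars ℝ).hasFDerivAt.comp_hasDerivAt t hm

end Matrix

theorem vqe_gradient_decomposition_general
    {d M : ℕ} (H : Matrix (Fin d) (Fin d) ℂ)
    (ψ₀ : Fin d → ℂ)
    (U : (Fin M → ℝ) → Matrix (Fin d) (Fin d) ℂ)
    (hU : ∀ θ, U θ ∈ Matrix.unitaryGroup (Fin d) ℂ)
    (θ : Fin M → ℝ) (U' : (Fin M → ℝ) →L[ℝ] Matrix (Fin d) (Fin d) ℂ)
    (hdiff : HasFDerivAt U U' θ) (j : Fin M) :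
    HasDerivAt
      (fun t : ℝ =>
        (star ψ₀ ⬝ᵥ ((U (Function.update θ j t))ᴴ * H * U (Function.update θ j t)).mulVec ψ₀).re)
      (((H * vecMulVec ((U θ).mulVec ψ₀) (star ((U θ).mulVec ψ₀)) -
            vecMulVec ((U θ).mulVec ψ₀) (star ((U θ).mulVec ψ₀)) * H)ᴴ *
          (U' (Pi.single j 1) * (U θ)ᴴ)).trace.re)
      (θ j) := by
  set A := U θ
  set V := U' (Pi.single j 1)
  have hcurve : HasDerivAt (fun t => U (Function.update θ j t)) V (θ j) := by
    rw [← Function.update_eq_self j θ] at hdiff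
    exact hdiff.comp_hasDerivAt (θ j) (hasDerivAt_update θ j (θ j))
  have hΩ : (V * Aᴴ)ᴴ = -(V * Aᴴ) := by
    have := skewAdjoint.mem_iff.mp (hcurve.mul_star_mem_skewAdjoint fun t => hU _)
    rwa [Function.update_eq_self, star_eq_conjTranspose] at this
  have hP : (vecMulVec (A *ᵥ ψ₀) (star (A *ᵥ ψ₀))).IsHermitian := by
    rw [IsHermitian, conjTranspose_vecMulVec, star_star]
  have hunit : Aᴴ * A = 1 := Unitary.star_mul_self_of_mem (hU θ)
  have hsandwich : Aᴴ * ((V * Aᴴ)ᴴ * H + H * (V * Aᴴ)) * A = Vᴴ * H * A + Aᴴ * H * V := by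
    have hunit' (X : Matrix (Fin d) (Fin d) ℂ) : Aᴴ * (A * X) = X := by
      rw [← Matrix.mul_assoc, hunit, Matrix.one_mul]
    simp only [conjTranspose_mul, conjTranspose_conjTranspose, Matrix.mul_add, Matrix.add_mul,
      Matrix.mul_assoc, hunit, hunit', Matrix.mul_one]
  refine (Complex.reCLM.hasFDerivAt.comp_hasDerivAt (θ j) (hasDerivAt_dotProduct_mulVec (star ψ₀)
    ψ₀ ((hcurve.star.mul_const H).mul hcurve))).congr_deriv ?_
  rw [← RCLike.re_to_complex, re_trace_commutator_conjTranspose_mul hP hΩ,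
    trace_vecMulVec_mulVec_star_mul, hsandwich, Function.update_eq_self]
  rfl

/-- For a parameterized unitary `U : ℝ^M → U(d)` differentiable at `θ`,
Hermitian `H`, unit vector `ψ₀`, and `J(θ) = ⟨ψ₀|U(θ)† H U(θ)|ψ₀⟩`, the partial derivative
`∂J/∂θ_j` equals the Hilbert–Schmidt inner product
`Tr{[H, |ψ(θ)⟩⟨ψ(θ)|]† ⬝ (∂_j U(θ)) U(θ)†}` of the Riemannian gradient with the tangent
direction, where `|ψ(θ)⟩ = U(θ)|ψ₀⟩`. -/
theorem vqe_gradient_decomposition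
    {d M : ℕ} (H : Matrix (Fin d) (Fin d) ℂ) (hH : H.IsHermitian)
    (ψ₀ : Fin d → ℂ) (hψ₀ : star ψ₀ ⬝ᵥ ψ₀ = 1)
    (U : (Fin M → ℝ) → Matrix (Fin d) (Fin d) ℂ)
    (hU : ∀ θ, U θ ∈ Matrix.unitaryGroup (Fin d) ℂ)
    (θ : Fin M → ℝ) (U' : (Fin M → ℝ) →L[ℝ] Matrix (Fin d) (Fin d) ℂ)
    (hdiff : HasFDerivAt U U' θ) (j : Fin M) :
    HasDerivAt
      (fun t : ℝ =>
        (star ψ₀ ⬝ᵥ ((U (Function.update θ j t))ᴴ * H * U (Function.update θ j t)).mulVec ψ₀).re)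
      (((H * vecMulVec ((U θ).mulVec ψ₀) (star ((U θ).mulVec ψ₀)) -
            vecMulVec ((U θ).mulVec ψ₀) (star ((U θ).mulVec ψ₀)) * H)ᴴ *
          (U' (Pi.single j 1) * (U θ)ᴴ)).trace.re)
      (θ j) :=
  vqe_gradient_decomposition_general H ψ₀ U hU θ U' hdiff j
end
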